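/- arXiv:1802.04145 — 3 statements merged into one kernel-verified Lean document; each statement's English description precedes it below -/
import Mathlib

section
/- If σ: ℝ → ℝ is non-expansive (|σ(s) - σ(t)| ≤ |s - t| for all s, t), and a convolutional layer maps x(u,λ') to y(u,λ) = σ(∑_{λ'=1}^{M'} ∫ W_{λ',λ}(v) x(u+v, λ') dv + b(λ)), with B := max{ sup_λ ∑_{λ'} ‖W_{λ',λ}‖_{L¹}, sup_{λ'} (M'/M) ∑_λ ‖W_{λ',λ}‖_{L¹} } ≤ 1, then for any two inputs x₁, x₂ one has ‖y[x₁] - y[x₂]‖ ≤ ‖x₁ - x₂‖, where ‖x‖² = (1/M)∑_λ (1/|Ω|) ∫_{ℝ²} |x(u,λ)|² du. -/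
open MeasureTheory Real
open scoped Convolution

lemma shift_aeeq {f g : (ℝ×ℝ) → ℝ} (h : f =ᵐ[volume] g) (u : ℝ×ℝ) :
    (fun v => f (u+v)) =ᵐ[volume] (fun v => g (u+v)) :=
  (measurePreserving_add_left volume u).quasiMeasurePreserving.ae_eq h

lemma asm_shift {f : (ℝ×ℝ) → ℝ} (hf : AEStronglyMeasurable f volume) (u : ℝ×ℝ) :
    AEStronglyMeasurable (fun v => f (u+v)) volume := by
  obtain ⟨g, hg, hfg⟩ := hf
  exact ⟨fun v => g (u+v), hg.comp_measurable (measurable_const_add u),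
    shift_aeeq hfg u⟩

lemma conv_aux (f h : (ℝ×ℝ) → ℝ) (hf : Integrable f) (hh : Integrable h) :
    (∀ᵐ u : ℝ×ℝ, Integrable fun v => f v * h (u + v)) ∧
    (Integrable fun u : ℝ×ℝ => ∫ v, f v * h (u + v)) ∧
    (∫ u : ℝ×ℝ, ∫ v, f v * h (u + v)) = (∫ v, f v) * ∫ v, h v := by
  set L : ℝ →L[ℝ] ℝ →L[ℝ] ℝ := ContinuousLinearMap.mul ℝ ℝ with hL
  have hnegemb : ∀ {g : (ℝ×ℝ) → ℝ}, Integrable g volume →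
      Integrable (fun v : ℝ×ℝ => g (-v)) volume := fun {g} hg =>
    ((Measure.measurePreserving_neg (volume : Measure (ℝ×ℝ))).integrable_comp_emb
      (MeasurableEquiv.neg (ℝ×ℝ)).measurableEmbedding).2 hg
  have hF : Integrable (fun v : ℝ×ℝ => f (-v)) := hnegemb hf
  have hconv : ∀ u : ℝ×ℝ, (∫ v, f v * h (u + v)) =
      ((fun v => f (-v)) ⋆[L, volume] h) u := by
    intro u
    rw [convolution_def, ← integral_neg_eq_self (fun v => f v * h (u + v)) volume]
    simp only [hL, ContinuousLinearMap.mul_apply', sub_eq_add_neg]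
  refine ⟨?_, ?_, ?_⟩
  · filter_upwards [hF.ae_convolution_exists L hh] with u hu
    have : Integrable (fun t : ℝ×ℝ => f (-t) * h (u - t)) := by
      simpa [hL, ConvolutionExistsAt] using hu
    have := hnegemb this
    simpa [sub_eq_add_neg] using this
  · have := hF.integrable_convolution L hh
    exact this.congr (Filter.Eventually.of_forall fun u => (hconv u).symm)
  · rw [MeasureTheory.integral_congr_ae (Filter.Eventually.of_forall hconv),
      integral_convolution L hF hh, integral_neg_eq_self f volume]
    simp [hL]

lemma cs_integral (φ ψ : (ℝ×ℝ) → ℝ) (hφ0 : ∀ v, 0 ≤ φ v) (hφ : Integrable φ)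
    (hψm : AEStronglyMeasurable ψ volume)
    (h2 : Integrable fun v => φ v * ψ v ^ 2) :
    (∫ v, φ v * ψ v) ^ 2 ≤ (∫ v, φ v) * ∫ v, φ v * ψ v ^ 2 := by
  have h1 : Integrable fun v => φ v * ψ v := by
    refine Integrable.mono' ((hφ.add h2).div_const 2)
      (hφ.aestronglyMeasurable.mul hψm) (Filter.Eventually.of_forall fun v => ?_)
    have h : |ψ v| ≤ (1 + ψ v ^ 2) / 2 := by nlinarith [sq_nonneg (|ψ v| - 1), sq_abs (ψ v)]
    calc ‖φ v * ψ v‖ = φ v * |ψ v| := by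
          rw [norm_mul, Real.norm_eq_abs, Real.norm_eq_abs, abs_of_nonneg (hφ0 v)]
      _ ≤ φ v * ((1 + ψ v ^ 2) / 2) := by
          exact mul_le_mul_of_nonneg_left h (hφ0 v)
      _ = (φ v + φ v * ψ v ^ 2) / 2 := by ring
  have key : ∀ t : ℝ, 0 ≤ (∫ v, φ v) * (t * t) + (2 * ∫ v, φ v * ψ v) * t
      + ∫ v, φ v * ψ v ^ 2 := by
    intro t
    have : (∫ v, φ v) * (t * t) + (2 * ∫ v, φ v * ψ v) * t + ∫ v, φ v * ψ v ^ 2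
        = ∫ v, φ v * (t + ψ v) ^ 2 := by
      have e1 : Integrable (fun v => (t*t) * φ v + (2*t) * (φ v * ψ v)) volume := by
        exact (hφ.const_mul _).add (h1.const_mul _)
      rw [show (fun v => φ v * (t + ψ v) ^ 2)
          = fun v => ((t*t) * φ v + (2*t) * (φ v * ψ v)) + φ v * ψ v ^ 2 by ext v; ring]
      rw [integral_add e1 h2, integral_add (hφ.const_mul _) (h1.const_mul _),
        integral_const_mul, integral_const_mul]
      ring
    rw [this]
    exact integral_nonneg fun v => mul_nonneg (hφ0 v) (sq_nonneg _)
  have hd := discrim_le_zero key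
  rw [discrim] at hd
  nlinarith [hd]

/-- Non-expansiveness of a convolutional layer (Proposition 3.1(a)):
if the Schur-type bound `B ≤ 1` holds for the filters, then the layer map
`x ↦ σ(∑_{λ'} ∫ W_{λ',λ}(v) x(u+v,λ') dv + b(λ))` is non-expansive in the
normalized `L²` feature-map norm. -/
theorem conv_layer_nonexpansive
    (M' M : ℕ) (hM' : 0 < M') (hM : 0 < M)
    (σ : ℝ → ℝ) (hσ : ∀ s t : ℝ, |σ s - σ t| ≤ |s - t|)
    (W : Fin M' → Fin M → (ℝ × ℝ) → ℝ)
    (hWint : ∀ lam' lam, Integrable (W lam' lam))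
    (b : Fin M → ℝ) (Ω : ℝ) (hΩ : 0 < Ω)
    (hB1 : ∀ lam : Fin M, ∑ lam' : Fin M', (∫ v, |W lam' lam v|) ≤ 1)
    (hB2 : ∀ lam' : Fin M', ((M' : ℝ) / (M : ℝ)) * ∑ lam : Fin M, (∫ v, |W lam' lam v|) ≤ 1)
    (x₁ x₂ : (ℝ × ℝ) → Fin M' → ℝ)
    (hx₁ : ∀ lam', MemLp (fun u => x₁ u lam') 2 volume)
    (hx₂ : ∀ lam', MemLp (fun u => x₂ u lam') 2 volume)
    (y : ((ℝ × ℝ) → Fin M' → ℝ) → (ℝ × ℝ) → Fin M → ℝ)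
    (hy : ∀ x u lam,
      y x u lam = σ ((∑ lam' : Fin M', ∫ v, W lam' lam v * x (u + v) lam') + b lam)) :
    Real.sqrt ((1 / (M : ℝ)) * ∑ lam : Fin M,
        (1 / Ω) * ∫ u, (y x₁ u lam - y x₂ u lam) ^ 2)
      ≤ Real.sqrt ((1 / (M' : ℝ)) * ∑ lam' : Fin M',
        (1 / Ω) * ∫ u, (x₁ u lam' - x₂ u lam') ^ 2) := by
  have hM0 : (0:ℝ) < M := by exact_mod_cast hM
  have hM'0 : (0:ℝ) < M' := by exact_mod_cast hM'
  -- difference function facts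
  have hdmem : ∀ lam', MemLp (fun u => x₁ u lam' - x₂ u lam') 2 volume :=
    fun lam' => (hx₁ lam').sub (hx₂ lam')
  have hdm : ∀ lam', AEStronglyMeasurable (fun u => x₁ u lam' - x₂ u lam') volume :=
    fun lam' => (hdmem lam').aestronglyMeasurable
  have hd2 : ∀ lam', Integrable (fun u => (x₁ u lam' - x₂ u lam') ^ 2) volume :=
    fun lam' => (hdmem lam').integrable_sq
  have hann : ∀ lam' lam, (0:ℝ) ≤ ∫ v, |W lam' lam v| :=
    fun lam' lam => integral_nonneg fun v => abs_nonneg _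
  have hDnn : ∀ lam', (0:ℝ) ≤ ∫ u, (x₁ u lam' - x₂ u lam') ^ 2 :=
    fun lam' => integral_nonneg fun u => sq_nonneg _
  -- convolution facts
  have convd : ∀ lam' lam, _ := fun lam' lam =>
    conv_aux (fun v => |W lam' lam v|) (fun u => (x₁ u lam' - x₂ u lam') ^ 2)
      (hWint lam' lam).abs (hd2 lam')
  have convx1 : ∀ lam' lam, _ := fun lam' lam =>
    conv_aux (fun v => |W lam' lam v|) (fun u => (x₁ u lam') ^ 2)
      (hWint lam' lam).abs (hx₁ lam').integrable_sq
  have convx2 : ∀ lam' lam, _ := fun lam' lam =>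
    conv_aux (fun v => |W lam' lam v|) (fun u => (x₂ u lam') ^ 2)
      (hWint lam' lam).abs (hx₂ lam').integrable_sq
  -- main per-λ estimate
  have step1 : ∀ lam : Fin M, (∫ u, (y x₁ u lam - y x₂ u lam) ^ 2)
      ≤ ∑ lam' : Fin M', (∫ v, |W lam' lam v|) * ∫ u, (x₁ u lam' - x₂ u lam') ^ 2 := by
    intro lam
    have hgi : Integrable (fun u : ℝ×ℝ =>
        ∑ lam' : Fin M', ∫ v, |W lam' lam v| * (x₁ (u+v) lam' - x₂ (u+v) lam') ^ 2) volume :=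
      integrable_finset_sum _ fun lam' _ => (convd lam' lam).2.1
    have hae : ∀ᵐ u : ℝ×ℝ, ∀ lam' : Fin M',
        Integrable (fun v => |W lam' lam v| * (x₁ (u+v) lam' - x₂ (u+v) lam') ^ 2) volume ∧
        Integrable (fun v => |W lam' lam v| * (x₁ (u+v) lam') ^ 2) volume ∧
        Integrable (fun v => |W lam' lam v| * (x₂ (u+v) lam') ^ 2) volume := by
      rw [ae_all_iff]
      intro lam'
      filter_upwards [(convd lam' lam).1, (convx1 lam' lam).1, (convx2 lam' lam).1]
        with u h1 h2 h3
      exact ⟨h1, h2, h3⟩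
    have hbound : ∀ᵐ u : ℝ×ℝ, (y x₁ u lam - y x₂ u lam) ^ 2 ≤
        ∑ lam' : Fin M', ∫ v, |W lam' lam v| * (x₁ (u+v) lam' - x₂ (u+v) lam') ^ 2 := by
      filter_upwards [hae] with u hu
      -- integrability of the convolution integrands at this u
      have hWx1 : ∀ lam', Integrable (fun v => W lam' lam v * x₁ (u+v) lam') volume := by
        intro lam'
        have hmaj : Integrable
            (fun v => |W lam' lam v| + |W lam' lam v| * x₁ (u+v) lam' ^ 2) volume :=
          (hWint lam' lam).abs.add (hu lam').2.1
        refine Integrable.mono' hmaj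
          ((hWint lam' lam).aestronglyMeasurable.mul
            (asm_shift (hx₁ lam').aestronglyMeasurable u))
          (Filter.Eventually.of_forall fun v => ?_)
        have h := abs_nonneg (W lam' lam v)
        have h2 := sq_abs (x₁ (u+v) lam')
        have h3 := abs_nonneg (x₁ (u+v) lam')
        rw [norm_mul, Real.norm_eq_abs, Real.norm_eq_abs]
        nlinarith [sq_nonneg (|x₁ (u+v) lam'| - 1), mul_nonneg h (sq_nonneg (|x₁ (u+v) lam'| - 1))]
      have hWx2 : ∀ lam', Integrable (fun v => W lam' lam v * x₂ (u+v) lam') volume := by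
        intro lam'
        have hmaj : Integrable
            (fun v => |W lam' lam v| + |W lam' lam v| * x₂ (u+v) lam' ^ 2) volume :=
          (hWint lam' lam).abs.add (hu lam').2.2
        refine Integrable.mono' hmaj
          ((hWint lam' lam).aestronglyMeasurable.mul
            (asm_shift (hx₂ lam').aestronglyMeasurable u))
          (Filter.Eventually.of_forall fun v => ?_)
        have h := abs_nonneg (W lam' lam v)
        rw [norm_mul, Real.norm_eq_abs, Real.norm_eq_abs]
        nlinarith [sq_nonneg (|x₂ (u+v) lam'| - 1), sq_abs (x₂ (u+v) lam'),
          mul_nonneg h (sq_nonneg (|x₂ (u+v) lam'| - 1))]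
      -- the pointwise bound
      have habs : |y x₁ u lam - y x₂ u lam| ≤
          ∑ lam' : Fin M', ∫ v, |W lam' lam v| * |x₁ (u+v) lam' - x₂ (u+v) lam'| := by
        rw [hy x₁ u lam, hy x₂ u lam]
        calc |σ ((∑ lam' : Fin M', ∫ v, W lam' lam v * x₁ (u + v) lam') + b lam)
              - σ ((∑ lam' : Fin M', ∫ v, W lam' lam v * x₂ (u + v) lam') + b lam)|
            ≤ |((∑ lam' : Fin M', ∫ v, W lam' lam v * x₁ (u + v) lam') + b lam)
              - ((∑ lam' : Fin M', ∫ v, W lam' lam v * x₂ (u + v) lam') + b lam)| := hσ _ _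
          _ = |∑ lam' : Fin M', ((∫ v, W lam' lam v * x₁ (u + v) lam')
              - ∫ v, W lam' lam v * x₂ (u + v) lam')| := by
              rw [add_sub_add_right_eq_sub, ← Finset.sum_sub_distrib]
          _ = |∑ lam' : Fin M', ∫ v, W lam' lam v * (x₁ (u+v) lam' - x₂ (u+v) lam')| := by
              congr 1
              refine Finset.sum_congr rfl fun lam' _ => ?_
              rw [← integral_sub (hWx1 lam') (hWx2 lam')]
              refine integral_congr_ae (Filter.Eventually.of_forall fun v => ?_)
              ring
          _ ≤ ∑ lam' : Fin M', |∫ v, W lam' lam v * (x₁ (u+v) lam' - x₂ (u+v) lam')| :=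
              Finset.abs_sum_le_sum_abs _ _
          _ ≤ ∑ lam' : Fin M', ∫ v, |W lam' lam v| * |x₁ (u+v) lam' - x₂ (u+v) lam'| := by
              refine Finset.sum_le_sum fun lam' _ => ?_
              simpa [Real.norm_eq_abs, abs_mul] using
                norm_integral_le_integral_norm (μ := volume)
                  (fun v => W lam' lam v * (x₁ (u+v) lam' - x₂ (u+v) lam'))
      -- Cauchy–Schwarz per λ'
      have cs : ∀ lam' : Fin M',
          (∫ v, |W lam' lam v| * |x₁ (u+v) lam' - x₂ (u+v) lam'|) ^ 2
            ≤ (∫ v, |W lam' lam v|) *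
              ∫ v, |W lam' lam v| * (x₁ (u+v) lam' - x₂ (u+v) lam') ^ 2 := by
        intro lam'
        have hψm : AEStronglyMeasurable (fun v => |x₁ (u+v) lam' - x₂ (u+v) lam'|) volume :=
          ((asm_shift (hdm lam') u).norm).congr
            (Filter.Eventually.of_forall fun v => (Real.norm_eq_abs _))
        have h2 : Integrable
            (fun v => |W lam' lam v| * |x₁ (u+v) lam' - x₂ (u+v) lam'| ^ 2) volume := by
          simpa [sq_abs] using (hu lam').1
        have := cs_integral (fun v => |W lam' lam v|)
          (fun v => |x₁ (u+v) lam' - x₂ (u+v) lam'|) (fun v => abs_nonneg _)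
          (hWint lam' lam).abs hψm h2
        simpa [sq_abs] using this
      -- assemble
      have hcnn : ∀ lam' : Fin M',
          (0:ℝ) ≤ ∫ v, |W lam' lam v| * |x₁ (u+v) lam' - x₂ (u+v) lam'| :=
        fun lam' => integral_nonneg fun v => mul_nonneg (abs_nonneg _) (abs_nonneg _)
      have henn : ∀ lam' : Fin M',
          (0:ℝ) ≤ ∫ v, |W lam' lam v| * (x₁ (u+v) lam' - x₂ (u+v) lam') ^ 2 :=
        fun lam' => integral_nonneg fun v => mul_nonneg (abs_nonneg _) (sq_nonneg _)
      have hc : ∀ lam' : Fin M',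
          (∫ v, |W lam' lam v| * |x₁ (u+v) lam' - x₂ (u+v) lam'|)
            ≤ Real.sqrt (∫ v, |W lam' lam v|) *
              Real.sqrt (∫ v, |W lam' lam v| * (x₁ (u+v) lam' - x₂ (u+v) lam') ^ 2) := by
        intro lam'
        have h := Real.sqrt_le_sqrt (cs lam')
        rwa [Real.sqrt_sq (hcnn lam'), Real.sqrt_mul (hann lam' lam)] at h
      calc (y x₁ u lam - y x₂ u lam) ^ 2
          = |y x₁ u lam - y x₂ u lam| ^ 2 := (sq_abs _).symm
        _ ≤ (∑ lam' : Fin M',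
              ∫ v, |W lam' lam v| * |x₁ (u+v) lam' - x₂ (u+v) lam'|) ^ 2 :=
            pow_le_pow_left₀ (abs_nonneg _) habs 2
        _ ≤ (∑ lam' : Fin M', Real.sqrt (∫ v, |W lam' lam v|) *
              Real.sqrt (∫ v, |W lam' lam v| * (x₁ (u+v) lam' - x₂ (u+v) lam') ^ 2)) ^ 2 :=
            pow_le_pow_left₀ (Finset.sum_nonneg fun lam' _ => hcnn lam')
              (Finset.sum_le_sum fun lam' _ => hc lam') 2
        _ ≤ (∑ lam' : Fin M', Real.sqrt (∫ v, |W lam' lam v|) ^ 2) *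
            ∑ lam' : Fin M', Real.sqrt
              (∫ v, |W lam' lam v| * (x₁ (u+v) lam' - x₂ (u+v) lam') ^ 2) ^ 2 :=
            Finset.sum_mul_sq_le_sq_mul_sq _ _ _
        _ = (∑ lam' : Fin M', ∫ v, |W lam' lam v|) *
            ∑ lam' : Fin M', ∫ v, |W lam' lam v| * (x₁ (u+v) lam' - x₂ (u+v) lam') ^ 2 := by
            rw [Finset.sum_congr rfl fun lam' _ => Real.sq_sqrt (hann lam' lam),
              Finset.sum_congr rfl fun lam' _ => Real.sq_sqrt (henn lam')]
        _ ≤ ∑ lam' : Fin M', ∫ v, |W lam' lam v| * (x₁ (u+v) lam' - x₂ (u+v) lam') ^ 2 :=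
            mul_le_of_le_one_left (Finset.sum_nonneg fun lam' _ => henn lam') (hB1 lam)
    calc (∫ u, (y x₁ u lam - y x₂ u lam) ^ 2)
        ≤ ∫ u, ∑ lam' : Fin M',
            ∫ v, |W lam' lam v| * (x₁ (u+v) lam' - x₂ (u+v) lam') ^ 2 :=
          integral_mono_of_nonneg (Filter.Eventually.of_forall fun u => sq_nonneg _) hgi hbound
      _ = ∑ lam' : Fin M', ∫ u, ∫ v, |W lam' lam v| * (x₁ (u+v) lam' - x₂ (u+v) lam') ^ 2 :=
          integral_finset_sum _ fun lam' _ => (convd lam' lam).2.1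
      _ = ∑ lam' : Fin M', (∫ v, |W lam' lam v|) * ∫ u, (x₁ u lam' - x₂ u lam') ^ 2 :=
          Finset.sum_congr rfl fun lam' _ => (convd lam' lam).2.2
  -- sum over λ and rearrange
  refine Real.sqrt_le_sqrt ?_
  have hsum_a : ∀ lam' : Fin M',
      ∑ lam : Fin M, (∫ v, |W lam' lam v|) ≤ (M:ℝ)/(M':ℝ) := by
    intro lam'
    have h := hB2 lam'
    rw [div_mul_eq_mul_div, div_le_one hM0] at h
    rw [le_div_iff₀ hM'0]
    linarith [h, mul_comm ((M':ℝ)) (∑ lam : Fin M, (∫ v, |W lam' lam v|))]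
  calc (1 / (M : ℝ)) * ∑ lam : Fin M, (1 / Ω) * ∫ u, (y x₁ u lam - y x₂ u lam) ^ 2
      ≤ (1 / (M : ℝ)) * ∑ lam : Fin M, (1 / Ω) *
        ∑ lam' : Fin M', (∫ v, |W lam' lam v|) * ∫ u, (x₁ u lam' - x₂ u lam') ^ 2 := by
        refine mul_le_mul_of_nonneg_left (Finset.sum_le_sum fun lam _ => ?_)
          (le_of_lt (one_div_pos.mpr hM0))
        exact mul_le_mul_of_nonneg_left (step1 lam) (le_of_lt (one_div_pos.mpr hΩ))
    _ = ∑ lam' : Fin M', ∑ lam : Fin M, (1 / (M : ℝ)) * ((1 / Ω) *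
        ((∫ v, |W lam' lam v|) * ∫ u, (x₁ u lam' - x₂ u lam') ^ 2)) := by
        simp_rw [Finset.mul_sum]
        rw [Finset.sum_comm]
    _ ≤ ∑ lam' : Fin M', (1 / (M' : ℝ)) * ((1 / Ω) * ∫ u, (x₁ u lam' - x₂ u lam') ^ 2) := by
        refine Finset.sum_le_sum fun lam' _ => ?_
        have heq : ∑ lam : Fin M, (1 / (M : ℝ)) * ((1 / Ω) *
            ((∫ v, |W lam' lam v|) * ∫ u, (x₁ u lam' - x₂ u lam') ^ 2))
            = ((1 / (M : ℝ)) * (1 / Ω) * ∫ u, (x₁ u lam' - x₂ u lam') ^ 2) *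
              ∑ lam : Fin M, (∫ v, |W lam' lam v|) := by
          rw [Finset.mul_sum]
          exact Finset.sum_congr rfl fun lam _ => by ring
        rw [heq]
        have hle : ((1 / (M : ℝ)) * (1 / Ω) * ∫ u, (x₁ u lam' - x₂ u lam') ^ 2) *
            ∑ lam : Fin M, (∫ v, |W lam' lam v|)
            ≤ ((1 / (M : ℝ)) * (1 / Ω) * ∫ u, (x₁ u lam' - x₂ u lam') ^ 2) *
              ((M:ℝ)/(M':ℝ)) := by
          refine mul_le_mul_of_nonneg_left (hsum_a lam') ?_
          have := hDnn lam'
          positivity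
        refine hle.trans (le_of_eq ?_)
        field_simp
    _ = (1 / (M' : ℝ)) * ∑ lam' : Fin M',
        (1 / Ω) * ∫ u, (x₁ u lam' - x₂ u lam') ^ 2 := by
        rw [Finset.mul_sum]
end

section
/- Let W ∈ C¹_c(ℝ) with C := ∫ |v||W'(v)| dv < ∞, and let τ: ℝ → ℝ be C¹ with |τ'|_∞ < 1/2, ρ(u) = u - τ(u). Define k(v,u) = W(v - ρ(u)) - W(ρ^{-1}(v) - u). Then sup_u ∫ |k(v,u)| dv ≤ 2C|τ'|_∞ and sup_v ∫ |k(v,u)| du ≤ 2C|τ'|_∞. -/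
open MeasureTheory Function Filter
open scoped ENNReal NNReal

open MeasureTheory Function Filter
open scoped ENNReal NNReal

lemma kernel_schur_key (W : ℝ → ℝ) (hW : ContDiff ℝ 1 W) (hWc : HasCompactSupport W)
    (c' : ℝ) (hc0 : 0 ≤ c')
    (α β p q : ℝ → ℝ) (hα : Measurable α) (hβ : Measurable β)
    (hsub : ∀ s, {x | s ∈ Set.uIoc (β x) (α x)} ⊆ Set.uIcc (p s) (q s))
    (hlen : ∀ s, |q s - p s| ≤ c' * |s|)
    (hint : Integrable (fun x => |W (α x) - W (β x)|)) :
    (∫ x, |W (α x) - W (β x)|) ≤ c' * ∫ s, |s| * |deriv W s| := by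
  have hW' : Continuous (deriv W) := hW.continuous_deriv le_rfl
  have hWd : Differentiable ℝ W := hW.differentiable one_ne_zero
  -- pointwise FTC bound
  have h1 : ∀ u v : ℝ, u ≤ v → |W v - W u| ≤ ∫ s in Set.Ioc u v, |deriv W s| := by
    intro u v huv
    have hftc : ∫ s in u..v, deriv W s = W v - W u :=
      intervalIntegral.integral_deriv_eq_sub (fun x _ => hWd.differentiableAt)
        (hW'.intervalIntegrable u v)
    rw [← hftc, intervalIntegral.integral_of_le huv]
    simpa [Real.norm_eq_abs] using
      norm_integral_le_integral_norm (μ := volume.restrict (Set.Ioc u v)) (deriv W)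
  have step1 : ∀ x, |W (α x) - W (β x)| ≤ ∫ s in Set.uIoc (β x) (α x), |deriv W s| := by
    intro x
    rcases le_total (β x) (α x) with h | h
    · rw [Set.uIoc_of_le h]; exact h1 _ _ h
    · rw [Set.uIoc_comm, Set.uIoc_of_le h, abs_sub_comm]; exact h1 _ _ h
  set g : ℝ → ℝ≥0∞ := fun s => ENNReal.ofReal |deriv W s| with hg_def
  have hg : Measurable g := (hW'.abs.measurable).ennreal_ofReal
  have step2 : ∀ x, ENNReal.ofReal |W (α x) - W (β x)| ≤ ∫⁻ s in Set.uIoc (β x) (α x), g s := by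
    intro x
    have hIcont : IntegrableOn (fun s => |deriv W s|) (Set.uIoc (β x) (α x)) :=
      intervalIntegrable_iff.mp ((hW'.abs).intervalIntegrable _ _)
    have heq := ofReal_integral_eq_lintegral_ofReal hIcont
      (Filter.Eventually.of_forall fun s => abs_nonneg _)
    calc ENNReal.ofReal |W (α x) - W (β x)|
        ≤ ENNReal.ofReal (∫ s in Set.uIoc (β x) (α x), |deriv W s|) :=
          ENNReal.ofReal_le_ofReal (step1 x)
      _ = _ := heq
  -- measurable sets
  set S : Set (ℝ × ℝ) := {r : ℝ × ℝ | r.2 ∈ Set.uIoc (β r.1) (α r.1)} with hS_def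
  have hS : MeasurableSet S := by
    have : S = {r : ℝ × ℝ | min (β r.1) (α r.1) < r.2} ∩ {r : ℝ × ℝ | r.2 ≤ max (β r.1) (α r.1)} := by
      ext r; simp [hS_def, Set.uIoc, Set.mem_Ioc, Set.mem_inter_iff]
    rw [this]
    exact (measurableSet_lt ((hβ.comp measurable_fst).min (hα.comp measurable_fst))
        measurable_snd).inter
      (measurableSet_le measurable_snd ((hβ.comp measurable_fst).max (hα.comp measurable_fst)))
  set T : ℝ → Set ℝ := fun s => {x | s ∈ Set.uIoc (β x) (α x)} with hT_def
  have hT : ∀ s, MeasurableSet (T s) := by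
    intro s
    have : T s = {x | min (β x) (α x) < s} ∩ {x | s ≤ max (β x) (α x)} := by
      ext x; simp [hT_def, Set.uIoc, Set.mem_Ioc, Set.mem_inter_iff]
    rw [this]
    exact (measurableSet_lt (hβ.min hα) measurable_const).inter
      (measurableSet_le measurable_const (hβ.max hα))
  -- Fubini swap
  have swap : ∫⁻ x, ∫⁻ s in Set.uIoc (β x) (α x), g s = ∫⁻ s, g s * volume (T s) := by
    have h2 : ∀ x, ∫⁻ s in Set.uIoc (β x) (α x), g s
        = ∫⁻ s, Set.indicator S (fun r => g r.2) (x, s) := by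
      intro x
      rw [← lintegral_indicator measurableSet_uIoc]
      refine lintegral_congr fun s => ?_
      by_cases h : s ∈ Set.uIoc (β x) (α x)
      · rw [Set.indicator_of_mem h, Set.indicator_of_mem (show (x, s) ∈ S from h)]
      · rw [Set.indicator_of_notMem h, Set.indicator_of_notMem (show (x, s) ∉ S from h)]
    have hmeas : AEMeasurable (Function.uncurry fun x s => Set.indicator S (fun r => g r.2) (x, s))
        (volume.prod volume) := by
      have : (Function.uncurry fun x s => Set.indicator S (fun r => g r.2) (x, s))
          = Set.indicator S (fun r => g r.2) := by
        funext r; simp [Function.uncurry]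
      rw [this]
      exact ((hg.comp measurable_snd).indicator hS).aemeasurable
    calc ∫⁻ x, ∫⁻ s in Set.uIoc (β x) (α x), g s
        = ∫⁻ x, ∫⁻ s, Set.indicator S (fun r => g r.2) (x, s) := by
          congr 1; funext x; exact h2 x
      _ = ∫⁻ s, ∫⁻ x, Set.indicator S (fun r => g r.2) (x, s) :=
          lintegral_lintegral_swap hmeas
      _ = ∫⁻ s, g s * volume (T s) := by
          congr 1; funext s
          have : (fun x => Set.indicator S (fun r => g r.2) (x, s))
              = (T s).indicator (fun _ => g s) := by
            funext x
            by_cases h : x ∈ T s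
            · rw [Set.indicator_of_mem h, Set.indicator_of_mem (show (x, s) ∈ S from h)]
            · rw [Set.indicator_of_notMem h, Set.indicator_of_notMem (show (x, s) ∉ S from h)]
          rw [this, lintegral_indicator_const (hT s)]
  have hbound : ∫⁻ s, g s * volume (T s) ≤ ∫⁻ s, ENNReal.ofReal (|deriv W s| * (c' * |s|)) := by
    refine lintegral_mono fun s => ?_
    have hvol : volume (T s) ≤ ENNReal.ofReal (c' * |s|) := by
      calc volume (T s) ≤ volume (Set.uIcc (p s) (q s)) := measure_mono (hsub s)
        _ = ENNReal.ofReal |q s - p s| := Real.volume_interval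
        _ ≤ ENNReal.ofReal (c' * |s|) := ENNReal.ofReal_le_ofReal (hlen s)
    calc g s * volume (T s) ≤ ENNReal.ofReal |deriv W s| * ENNReal.ofReal (c' * |s|) :=
        mul_le_mul' le_rfl hvol
      _ = ENNReal.ofReal (|deriv W s| * (c' * |s|)) := (ENNReal.ofReal_mul (abs_nonneg _)).symm
  have hInt2 : Integrable (fun s => |deriv W s| * (c' * |s|)) := by
    refine Continuous.integrable_of_hasCompactSupport (by continuity) ?_
    exact (hWc.deriv.abs).mul_right
  have hlast : ∫⁻ s, ENNReal.ofReal (|deriv W s| * (c' * |s|))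
      = ENNReal.ofReal (c' * ∫ s, |s| * |deriv W s|) := by
    rw [← ofReal_integral_eq_lintegral_ofReal hInt2
      (Filter.Eventually.of_forall fun s => mul_nonneg (abs_nonneg _)
        (mul_nonneg hc0 (abs_nonneg _)))]
    congr 1
    rw [← integral_const_mul]
    congr 1; funext s; ring
  have hnn : 0 ≤ c' * ∫ s, |s| * |deriv W s| :=
    mul_nonneg hc0 (integral_nonneg fun s => mul_nonneg (abs_nonneg _) (abs_nonneg _))
  have hmain : ENNReal.ofReal (∫ x, |W (α x) - W (β x)|)
      ≤ ENNReal.ofReal (c' * ∫ s, |s| * |deriv W s|) := by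
    rw [ofReal_integral_eq_lintegral_ofReal hint
      (Filter.Eventually.of_forall fun x => abs_nonneg _)]
    calc ∫⁻ x, ENNReal.ofReal |W (α x) - W (β x)|
        ≤ ∫⁻ x, ∫⁻ s in Set.uIoc (β x) (α x), g s := lintegral_mono step2
      _ = ∫⁻ s, g s * volume (T s) := swap
      _ ≤ ∫⁻ s, ENNReal.ofReal (|deriv W s| * (c' * |s|)) := hbound
      _ = _ := hlast
  exact (ENNReal.ofReal_le_ofReal_iff hnn).mp hmain


/-- Kernel estimate for the `E₁` term in the 1D proof of Lemma 3.2: with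
`C = ∫ |v||W'(v)| dv`, `|τ'|_∞ ≤ c < 1/2`, `ρ = id - τ`, and
`k(v,u) = W(v - ρ(u)) - W(ρ⁻¹(v) - u)`, both `sup_u ∫|k(v,u)|dv` and
`sup_v ∫|k(v,u)|du` are bounded by `2Cc`. -/
theorem kernel_E1_schur_bounds
    (W : ℝ → ℝ) (hW : ContDiff ℝ 1 W) (hWc : HasCompactSupport W)
    (C : ℝ) (hC : C = ∫ v, |v| * |deriv W v|)
    (τ : ℝ → ℝ) (hτ : ContDiff ℝ 1 τ)
    (c : ℝ) (hc : ∀ t, |deriv τ t| ≤ c) (hc2 : c < 1 / 2)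
    (ρ : ℝ → ℝ) (hρ : ∀ t, ρ t = t - τ t)
    (k : ℝ → ℝ → ℝ)
    (hk : ∀ v u, k v u = W (v - ρ u) - W (Function.invFun ρ v - u)) :
    (∀ u, (∫ v, |k v u|) ≤ 2 * C * c) ∧ (∀ v, (∫ u, |k v u|) ≤ 2 * C * c) := by
  have hc0 : 0 ≤ c := (abs_nonneg _).trans (hc 0)
  have hτd : Differentiable ℝ τ := hτ.differentiable one_ne_zero
  -- Lipschitz bound for τ
  have hl : LipschitzWith (Real.toNNReal c) τ :=
    lipschitzWith_of_nnnorm_deriv_le hτd (fun x => by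
      rw [← NNReal.coe_le_coe, coe_nnnorm, Real.norm_eq_abs, Real.coe_toNNReal c hc0]
      exact hc x)
  have hlip : ∀ a b : ℝ, |τ a - τ b| ≤ c * |a - b| := by
    intro a b
    have h := hl.dist_le_mul a b
    rwa [Real.dist_eq, Real.dist_eq, Real.coe_toNNReal c hc0] at h
  have hρc : Continuous ρ := by
    have : ρ = fun t => t - τ t := funext hρ
    rw [this]; exact continuous_id.sub hτ.continuous
  have hmono : StrictMono ρ := by
    intro x y hxy
    have h1 : ρ y - ρ x = (y - x) - (τ y - τ x) := by rw [hρ, hρ]; ring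
    have h2 : |τ y - τ x| ≤ c * |y - x| := hlip y x
    have h3 : |y - x| = y - x := abs_of_pos (sub_pos.2 hxy)
    rw [h3] at h2
    have h4 : τ y - τ x ≤ c * (y - x) := (le_abs_self _).trans h2
    nlinarith [sub_pos.2 hxy]
  have hlb : ∀ x y : ℝ, x ≤ y → (1 - c) * (y - x) ≤ ρ y - ρ x := by
    intro x y h
    have h1 : ρ y - ρ x = (y - x) - (τ y - τ x) := by rw [hρ, hρ]; ring
    have h2 : |τ y - τ x| ≤ c * |y - x| := hlip y x
    rw [abs_of_nonneg (sub_nonneg.2 h)] at h2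
    have h4 : τ y - τ x ≤ c * (y - x) := (le_abs_self _).trans h2
    nlinarith
  have hcpos : (0:ℝ) < 1 - c := by linarith
  have hid_top : Tendsto (fun x : ℝ => x) atTop atTop := tendsto_id
  have hid_bot : Tendsto (fun x : ℝ => x) atBot atBot := tendsto_id
  have htop0 : Tendsto (fun x : ℝ => (1 - c) * x) atTop atTop :=
    Filter.Tendsto.const_mul_atTop hcpos hid_top
  have hbot0 : Tendsto (fun x : ℝ => (1 - c) * x) atBot atBot :=
    Filter.Tendsto.const_mul_atBot hcpos hid_bot
  have htop : Tendsto (fun x : ℝ => (1 - c) * x + ρ 0) atTop atTop :=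
    tendsto_atTop_add_const_right atTop (ρ 0) htop0
  have hbot : Tendsto (fun x : ℝ => (1 - c) * x + ρ 0) atBot atBot :=
    tendsto_atBot_add_const_right atBot (ρ 0) hbot0
  have hsurj : Function.Surjective ρ := by
    apply Continuous.surjective hρc
    · refine tendsto_atTop_mono' atTop ?_ htop
      filter_upwards [Filter.eventually_ge_atTop (0 : ℝ)] with x hx
      have h := hlb 0 x hx
      have h2 : (1 - c) * (x - 0) = (1 - c) * x := by ring
      linarith [h, h2.symm.le]
    · refine tendsto_atBot_mono' atBot ?_ hbot
      filter_upwards [Filter.eventually_le_atBot (0 : ℝ)] with x hx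
      have h := hlb x 0 hx
      have h2 : (1 - c) * (0 - x) = -((1 - c) * x) := by ring
      linarith [h, h2.le]
  have hrinv : ∀ v, ρ (Function.invFun ρ v) = v := fun v => Function.invFun_eq (hsurj v)
  -- order isomorphism and continuity of the inverse
  let e : ℝ ≃o ℝ := StrictMono.orderIsoOfSurjective ρ hmono hsurj
  have he : ∀ x, e x = ρ x := fun x => by
    rw [StrictMono.coe_orderIsoOfSurjective]
  have hinv_eq : Function.invFun ρ = ⇑e.symm := by
    funext v
    apply hmono.injective
    rw [hrinv]
    have h1 : e (e.symm v) = v := e.apply_symm_apply v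
    rw [he] at h1
    rw [h1]
  have hinvc : Continuous (Function.invFun ρ) := by
    rw [hinv_eq]; exact (OrderIso.toHomeomorph e.symm).continuous
  -- integrability of the two pieces
  have hWcont : Continuous W := hW.continuous
  have hint1 : ∀ u, Integrable (fun v => |W (v - ρ u) - W (Function.invFun ρ v - u)|) := by
    intro u
    have h1 : Integrable (fun v => W (v - ρ u)) := by
      have hcs : HasCompactSupport (fun v => W (v - ρ u)) :=
        hWc.comp_homeomorph (Homeomorph.subRight (ρ u))
      exact (hWcont.comp (continuous_id.sub continuous_const)).integrable_of_hasCompactSupport hcs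
    have h2 : Integrable (fun v => W (Function.invFun ρ v - u)) := by
      have hcs : HasCompactSupport (fun v => W (Function.invFun ρ v - u)) := by
        have := hWc.comp_homeomorph ((OrderIso.toHomeomorph e.symm).trans (Homeomorph.subRight u))
        have heq : (W ∘ ((OrderIso.toHomeomorph e.symm).trans (Homeomorph.subRight u)))
            = fun v => W (Function.invFun ρ v - u) := by
          funext v; simp [Function.comp, Homeomorph.trans_apply, hinv_eq]
        rwa [heq] at this
      exact (hWcont.comp (hinvc.sub continuous_const)).integrable_of_hasCompactSupport hcs
    exact (h1.sub h2).abs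
  have hint2 : ∀ v, Integrable (fun u => |W (v - ρ u) - W (Function.invFun ρ v - u)|) := by
    intro v
    have h1 : Integrable (fun u => W (v - ρ u)) := by
      have hcs : HasCompactSupport (fun u => W (v - ρ u)) := by
        have := hWc.comp_homeomorph ((OrderIso.toHomeomorph e).trans (Homeomorph.subLeft v))
        have heq : (W ∘ ((OrderIso.toHomeomorph e).trans (Homeomorph.subLeft v)))
            = fun u => W (v - ρ u) := by
          funext u; simp [Function.comp, Homeomorph.trans_apply, he]
        rwa [heq] at this
      exact (hWcont.comp (continuous_const.sub hρc)).integrable_of_hasCompactSupport hcs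
    have h2 : Integrable (fun u => W (Function.invFun ρ v - u)) := by
      have hcs : HasCompactSupport (fun u => W (Function.invFun ρ v - u)) :=
        hWc.comp_homeomorph (Homeomorph.subLeft (Function.invFun ρ v))
      exact (hWcont.comp (continuous_const.sub continuous_id)).integrable_of_hasCompactSupport hcs
    exact (h1.sub h2).abs
  have hc0' : 0 ≤ 2 * c := by linarith
  have hCint : C = ∫ s, |s| * |deriv W s| := hC
  constructor
  · -- first bound: fixed u, integrate over v
    intro u
    have key := kernel_schur_key W hW hWc (2 * c) hc0'
      (fun v => v - ρ u) (fun v => Function.invFun ρ v - u)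
      (fun s => s + ρ u) (fun s => ρ (s + u))
      ((continuous_id.sub continuous_const).measurable)
      ((hinvc.sub continuous_const).measurable)
      (fun s => by
        intro v hv
        simp only [Set.mem_setOf_eq] at hv
        rcases Set.mem_uIoc.mp hv with ⟨h1, h2⟩ | ⟨h1, h2⟩
        · -- invFun ρ v - u < s ≤ v - ρ u
          have hA : s + ρ u ≤ v := by linarith
          have hB : v < ρ (s + u) := by
            have hlt : Function.invFun ρ v < s + u := by linarith
            have := hmono hlt
            rwa [hrinv] at this
          exact Set.mem_uIcc.mpr (Or.inl ⟨hA, hB.le⟩)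
        · -- v - ρ u < s ≤ invFun ρ v - u
          have hA : v < s + ρ u := by linarith
          have hB : ρ (s + u) ≤ v := by
            have hle : s + u ≤ Function.invFun ρ v := by linarith
            have := hmono.monotone hle
            rwa [hrinv] at this
          exact Set.mem_uIcc.mpr (Or.inr ⟨hB, hA.le⟩))
      (fun s => by
        have heq : ρ (s + u) - (s + ρ u) = τ u - τ (s + u) := by rw [hρ, hρ]; ring
        rw [heq]
        calc |τ u - τ (s + u)| ≤ c * |u - (s + u)| := hlip u (s + u)
          _ = c * |s| := by rw [show u - (s + u) = -s by ring, abs_neg]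
          _ ≤ 2 * c * |s| := by nlinarith [abs_nonneg s])
      (hint1 u)
    calc (∫ v, |k v u|) = ∫ v, |W (v - ρ u) - W (Function.invFun ρ v - u)| := by
          congr 1; funext v; rw [hk]
      _ ≤ 2 * c * ∫ s, |s| * |deriv W s| := key
      _ = 2 * C * c := by rw [hCint]; ring
  · -- second bound: fixed v, integrate over u
    intro v
    have key := kernel_schur_key W hW hWc (2 * c) hc0'
      (fun u => v - ρ u) (fun u => Function.invFun ρ v - u)
      (fun s => Function.invFun ρ (v - s)) (fun s => Function.invFun ρ v - s)
      ((continuous_const.sub hρc).measurable)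
      ((continuous_const.sub continuous_id).measurable)
      (fun s => by
        intro u hu
        simp only [Set.mem_setOf_eq] at hu
        rcases Set.mem_uIoc.mp hu with ⟨h1, h2⟩ | ⟨h1, h2⟩
        · -- invFun ρ v - u < s ≤ v - ρ u
          have hA : u ≤ Function.invFun ρ (v - s) := by
            have hle : ρ u ≤ v - s := by linarith
            have h3 : ρ u ≤ ρ (Function.invFun ρ (v - s)) := by rwa [hrinv]
            exact hmono.le_iff_le.mp h3
          have hB : Function.invFun ρ v - s < u := by linarith
          exact Set.mem_uIcc.mpr (Or.inr ⟨hB.le, hA⟩)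
        · -- v - ρ u < s ≤ invFun ρ v - u
          have hA : Function.invFun ρ (v - s) < u := by
            have hlt : v - s < ρ u := by linarith
            have h3 : ρ (Function.invFun ρ (v - s)) < ρ u := by rwa [hrinv]
            exact hmono.lt_iff_lt.mp h3
          have hB : u ≤ Function.invFun ρ v - s := by linarith
          exact Set.mem_uIcc.mpr (Or.inl ⟨hA.le, hB⟩))
      (fun s => by
        set P := Function.invFun ρ v with hP
        set Q := Function.invFun ρ (v - s) with hQ
        have h1 : P - τ P = v := by rw [← hρ]; exact hrinv v
        have h2 : Q - τ Q = v - s := by rw [← hρ]; exact hrinv (v - s)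
        have hPQ : (P - Q) - (τ P - τ Q) = s := by linarith
        have h3 : |τ P - τ Q| ≤ c * |P - Q| := hlip P Q
        have h4 : |P - Q| ≤ 2 * |s| := by
          have h5 : |P - Q| ≤ |s| + c * |P - Q| := by
            calc |P - Q| = |s + (τ P - τ Q)| := by
                  rw [show s + (τ P - τ Q) = P - Q from by linarith]
              _ ≤ |s| + |τ P - τ Q| := abs_add_le _ _
              _ ≤ |s| + c * |P - Q| := by linarith
          nlinarith [abs_nonneg (P - Q), abs_nonneg s]
        have heq : (P - s) - Q = τ P - τ Q := by linarith
        calc |(P - s) - Q| = |τ P - τ Q| := by rw [heq]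
          _ ≤ c * |P - Q| := h3
          _ ≤ c * (2 * |s|) := mul_le_mul_of_nonneg_left h4 hc0
          _ = 2 * c * |s| := by ring)
      (hint2 v)
    calc (∫ u, |k v u|) = ∫ u, |W (v - ρ u) - W (Function.invFun ρ v - u)| := by
          congr 1; funext u; rw [hk]
      _ ≤ 2 * c * ∫ s, |s| * |deriv W s| := key
      _ = 2 * C * c := by rw [hCint]; ring
end

section
/- Let W ∈ L¹(ℝ) with B = ‖W‖_{L¹}, and let τ: ℝ → ℝ be C¹ with |τ'|_∞ < 1/2, ρ(u) = u - τ(u). Define k(v,u) = W(ρ^{-1}(v) - u)(|(ρ^{-1})'(v)| - 1). Then sup_v ∫ |k(v,u)| du ≤ 2B|τ'|_∞ and sup_u ∫ |k(v,u)| dv ≤ B|τ'|_∞. -/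
open MeasureTheory Function

/-- Kernel estimate for the `E₂` term in the 1D proof of Lemma 3.2: with
`B = ‖W‖_{L¹}`, `|τ'|_∞ ≤ c < 1/2`, `ρ = id - τ`, and
`k(v,u) = W(ρ⁻¹(v) - u)(|(ρ⁻¹)'(v)| - 1)`, one has
`sup_v ∫|k(v,u)|du ≤ 2Bc` and `sup_u ∫|k(v,u)|dv ≤ Bc`. -/
theorem kernel_E2_schur_bounds
    (W : ℝ → ℝ) (hWint : Integrable W)
    (B : ℝ) (hB : B = ∫ v, |W v|)
    (τ : ℝ → ℝ) (hτ : ContDiff ℝ 1 τ)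
    (c : ℝ) (hc : ∀ t, |deriv τ t| ≤ c) (hc2 : c < 1 / 2)
    (ρ : ℝ → ℝ) (hρ : ∀ t, ρ t = t - τ t)
    (k : ℝ → ℝ → ℝ)
    (hk : ∀ v u, k v u
      = W (Function.invFun ρ v - u) * (|deriv (Function.invFun ρ) v| - 1)) :
    (∀ v, (∫ u, |k v u|) ≤ 2 * B * c) ∧ (∀ u, (∫ v, |k v u|) ≤ B * c) := by
  have hc0 : 0 ≤ c := (abs_nonneg _).trans (hc 0)
  have hBnn : 0 ≤ B := by
    rw [hB]; exact integral_nonneg fun x => abs_nonneg _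
  have hτd : Differentiable ℝ τ := hτ.differentiable one_ne_zero
  have hρfun : ρ = fun t => t - τ t := funext hρ
  have hρD : ∀ t, HasDerivAt ρ (1 - deriv τ t) t := by
    intro t
    rw [hρfun]
    exact (hasDerivAt_id t).sub (hτd t).hasDerivAt
  have hd_pos : ∀ t, (0:ℝ) < 1 - deriv τ t := by
    intro t
    have := (abs_le.mp (hc t)).2
    linarith
  have hd_ge : ∀ t, 1 - c ≤ 1 - deriv τ t := by
    intro t
    have := (abs_le.mp (hc t)).2
    linarith
  have hmono : StrictMono ρ := by
    refine strictMono_of_deriv_pos fun t => ?_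
    rw [(hρD t).deriv]; exact hd_pos t
  have hinj : Function.Injective ρ := hmono.injective
  have hρcont : Continuous ρ := by
    rw [hρfun]; exact continuous_id.sub hτd.continuous
  -- surjectivity via growth estimate
  have hg : Monotone fun t => ρ t - (1 - c) * t := by
    refine monotone_of_deriv_nonneg (fun t => ((hρD t).sub
      ((hasDerivAt_id t).const_mul (1 - c))).differentiableAt) fun t => ?_
    have : HasDerivAt (fun t => ρ t - (1 - c) * t) ((1 - deriv τ t) - (1 - c) * 1) t :=
      (hρD t).sub ((hasDerivAt_id t).const_mul (1 - c))
    rw [this.deriv]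
    have := hd_ge t
    linarith
  have hsurj : Function.Surjective ρ := by
    have hlin_top : Filter.Tendsto (fun t : ℝ => (ρ 0 - (1 - c) * 0) + (1 - c) * t)
        Filter.atTop Filter.atTop :=
      Filter.tendsto_atTop_add_const_left _ _
        ((Filter.tendsto_id).const_mul_atTop (by linarith))
    have hlin_bot : Filter.Tendsto (fun t : ℝ => (ρ 0 - (1 - c) * 0) + (1 - c) * t)
        Filter.atBot Filter.atBot :=
      Filter.tendsto_atBot_add_const_left _ _
        ((Filter.tendsto_id).const_mul_atBot (by linarith))
    refine hρcont.surjective ?_ ?_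
    · refine Filter.tendsto_atTop_mono' Filter.atTop ?_ hlin_top
      filter_upwards [Filter.eventually_ge_atTop (0:ℝ)] with t ht
      have h := hg (show (0:ℝ) ≤ t from ht)
      simp only at h
      show (ρ 0 - (1 - c) * 0) + (1 - c) * t ≤ ρ t
      linarith
    · refine Filter.tendsto_atBot_mono' Filter.atBot ?_ hlin_bot
      filter_upwards [Filter.eventually_le_atBot (0:ℝ)] with t ht
      have h := hg (show t ≤ (0:ℝ) from ht)
      simp only at h
      show ρ t ≤ (ρ 0 - (1 - c) * 0) + (1 - c) * t
      linarith
  have hlinv : ∀ x, invFun ρ (ρ x) = x := fun x => leftInverse_invFun hinj x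
  have hrinv : ∀ v, ρ (invFun ρ v) = v := fun v => rightInverse_invFun hsurj v
  -- continuity of the inverse
  have hinv_eq : invFun ρ = ⇑(StrictMono.orderIsoOfSurjective ρ hmono hsurj).symm := by
    funext v
    apply hinj
    rw [hrinv]
    have : ρ ((StrictMono.orderIsoOfSurjective ρ hmono hsurj).symm v) = v :=
      StrictMono.orderIsoOfSurjective_self_symm_apply ρ hmono hsurj v
    rw [this]
  have hcontinv : Continuous (invFun ρ) := by
    rw [hinv_eq]
    exact OrderIso.continuous _
  -- derivative of the inverse
  have hinvD : ∀ v, HasDerivAt (invFun ρ) (1 - deriv τ (invFun ρ v))⁻¹ v := by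
    intro v
    exact HasDerivAt.of_local_left_inverse hcontinv.continuousAt
      (hρD (invFun ρ v)) (ne_of_gt (hd_pos _)) (Filter.Eventually.of_forall hrinv)
  constructor
  · -- first bound
    intro v
    set x := invFun ρ v with hx
    have hdpos : (0:ℝ) < 1 - deriv τ x := hd_pos x
    have hderiv : deriv (invFun ρ) v = (1 - deriv τ x)⁻¹ := (hinvD v).deriv
    have hC : |(|deriv (invFun ρ) v| - 1)| ≤ 2 * c := by
      rw [hderiv, abs_of_pos (inv_pos.mpr hdpos)]
      have heq : (1 - deriv τ x)⁻¹ - 1 = deriv τ x / (1 - deriv τ x) := by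
        field_simp
        ring
      rw [heq, abs_div, abs_of_pos hdpos, div_le_iff₀ hdpos]
      have h1 : |deriv τ x| ≤ c := hc x
      have h2 : 1 - c ≤ 1 - deriv τ x := hd_ge x
      nlinarith
    have hint : (∫ u, |k v u|) = B * |(|deriv (invFun ρ) v| - 1)| := by
      calc (∫ u, |k v u|)
          = ∫ u, |W (x - u)| * |(|deriv (invFun ρ) v| - 1)| := by
            congr 1; funext u; rw [hk v u, abs_mul]
        _ = (∫ u, |W (x - u)|) * |(|deriv (invFun ρ) v| - 1)| := by
            rw [integral_mul_const]
        _ = B * |(|deriv (invFun ρ) v| - 1)| := by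
            rw [hB, integral_sub_left_eq_self (fun t => |W t|) volume x]
    rw [hint]
    calc B * |(|deriv (invFun ρ) v| - 1)| ≤ B * (2 * c) :=
          mul_le_mul_of_nonneg_left hC hBnn
      _ = 2 * B * c := by ring
  · -- second bound
    intro u
    have hchg : (∫ v, |k v u|) = ∫ x, |1 - deriv τ x| • |k (ρ x) u| := by
      have h := integral_image_eq_integral_abs_deriv_smul MeasurableSet.univ
        (fun x _ => (hρD x).hasDerivWithinAt) hinj.injOn (fun v => |k v u|)
      rw [Set.image_univ, hsurj.range_eq] at h
      simpa using h
    rw [hchg]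
    have hptw : ∀ x, |1 - deriv τ x| • |k (ρ x) u| ≤ |W (x - u)| * c := by
      intro x
      have hdpos : (0:ℝ) < 1 - deriv τ x := hd_pos x
      have hder : deriv (invFun ρ) (ρ x) = (1 - deriv τ x)⁻¹ := by
        have := (hinvD (ρ x)).deriv
        rwa [hlinv] at this
      rw [hk, hlinv, hder, abs_of_pos (inv_pos.mpr hdpos)]
      have heq : (1 - deriv τ x)⁻¹ - 1 = deriv τ x / (1 - deriv τ x) := by
        field_simp
        ring
      rw [smul_eq_mul, abs_mul, heq, abs_div, abs_of_pos hdpos]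
      have h1 : |deriv τ x| ≤ c := hc x
      have hWnn : (0:ℝ) ≤ |W (x - u)| := abs_nonneg _
      calc (1 - deriv τ x) * (|W (x - u)| * (|deriv τ x| / (1 - deriv τ x)))
          = |W (x - u)| * |deriv τ x| := by field_simp
        _ ≤ |W (x - u)| * c := mul_le_mul_of_nonneg_left h1 hWnn
    have hInt : Integrable (fun x => |W (x - u)| * c) volume :=
      (hWint.abs.comp_sub_right u).mul_const c
    calc (∫ x, |1 - deriv τ x| • |k (ρ x) u|)
        ≤ ∫ x, |W (x - u)| * c := by
          refine integral_mono_of_nonneg ?_ hInt ?_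
          · filter_upwards with x
            exact smul_nonneg (abs_nonneg _) (abs_nonneg _)
          · filter_upwards with x
            exact hptw x
      _ = (∫ x, |W (x - u)|) * c := integral_mul_const _ _
      _ = B * c := by
          rw [hB, integral_sub_right_eq_self (fun t => |W t|) u]
end
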